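/- arXiv:1312.5594 — 3 statements merged into one kernel-verified Lean document; each statement's English description precedes it below -/
import Mathlib

section
/- Let Σ be a map assigning to every probability distribution P on ℝ^q a symmetric positive semidefinite q×q real matrix Σ(P), which is linear equivariant in the sense that Σ(P^B) = B·Σ(P)·Bᵀ for every probability distribution P and every invertible matrix B ∈ ℝ^{q×q}, where P^B denotes the law of BX for X ∼ P. If P is elliptically symmetric with center 0 and scatter matrix Σ₀ ∈ ℝ^{q×q} (symmetric positive definite), then Σ(P) = c·Σ₀ for some real number c ≥ 0. -/
open MeasureTheory Matrix

/-- The law `P^B` of `B·X` when `X ∼ P`. -/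
noncomputable def mapLin {q : ℕ} (P : Measure (Fin q → ℝ)) (B : Matrix (Fin q) (Fin q) ℝ) :
    Measure (Fin q → ℝ) :=
  P.map fun x => B.mulVec x

/-- `P` is spherically symmetric around `0`: the law of `U·X` equals the law of `X`
for every orthogonal matrix `U`. -/
def SphericallySymmetric {q : ℕ} (P : Measure (Fin q → ℝ)) : Prop :=
  ∀ U : Matrix (Fin q) (Fin q) ℝ, Uᵀ * U = 1 → mapLin P U = P

/-- `P` is elliptically symmetric with center `μ₀` and (positive definite) scatter matrix
`S0`: the law of `S0^{-1/2}·(X - μ₀)` is spherically symmetric. -/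
def EllipticallySymmetric {q : ℕ} (P : Measure (Fin q → ℝ)) (μ₀ : Fin q → ℝ)
    {S0 : Matrix (Fin q) (Fin q) ℝ} (hS0 : S0.PosDef) : Prop :=
  SphericallySymmetric (P.map fun x => ((hS0.1.eigenvectorUnitary : Matrix (Fin q) (Fin q) ℝ) *
      diagonal (Real.sqrt ∘ hS0.1.eigenvalues) *
      (star hS0.1.eigenvectorUnitary : Matrix (Fin q) (Fin q) ℝ))⁻¹.mulVec (x - μ₀))


lemma measurable_mulVec' {q : ℕ} (B : Matrix (Fin q) (Fin q) ℝ) :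
    Measurable fun x : Fin q → ℝ => B.mulVec x := by
  apply measurable_pi_lambda
  intro i
  simp only [Matrix.mulVec, dotProduct]
  exact Finset.measurable_sum _ fun j _ => (measurable_pi_apply j).const_mul _

lemma invariant_eq_smul_one {q : ℕ} (hq : 1 ≤ q) (M : Matrix (Fin q) (Fin q) ℝ)
    (hpsd : M.PosSemidef)
    (hinv : ∀ U : Matrix (Fin q) (Fin q) ℝ, Uᵀ * U = 1 → U * M * Uᵀ = M) :
    ∃ c : ℝ, 0 ≤ c ∧ M = c • (1 : Matrix (Fin q) (Fin q) ℝ) := by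
  have i0 : Fin q := ⟨0, hq⟩
  -- off-diagonal entries vanish
  have hoff : ∀ j k : Fin q, j ≠ k → M j k = 0 := by
    intro j k hjk
    set d : Fin q → ℝ := fun l => if l = j then (-1 : ℝ) else 1 with hd
    have hDD : (Matrix.diagonal d)ᵀ * Matrix.diagonal d = 1 := by
      have hdd : d * d = 1 := by
        funext l
        by_cases h : l = j <;> simp [hd, h]
      rw [Matrix.diagonal_transpose, Matrix.diagonal_mul_diagonal,
        show (fun i => d i * d i) = d * d from rfl, hdd]
      exact Matrix.diagonal_one
    have h1 := hinv (Matrix.diagonal d) hDD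
    have h2 := congrFun (congrFun h1 j) k
    rw [Matrix.diagonal_transpose] at h2
    rw [Matrix.mul_diagonal, Matrix.diagonal_mul] at h2
    simp only [hd, if_pos rfl, if_neg (Ne.symm hjk)] at h2
    linarith
  -- diagonal entries are equal
  have hdiag : ∀ i : Fin q, M i i = M i0 i0 := by
    intro i
    set σ : Equiv.Perm (Fin q) := Equiv.swap i0 i with hσ
    set U : Matrix (Fin q) (Fin q) ℝ := σ.permMatrix ℝ with hU
    have hUt : Uᵀ = σ⁻¹.permMatrix ℝ := by
      rw [hU, Equiv.Perm.permMatrix, ← PEquiv.toMatrix_symm, ← Equiv.toPEquiv_symm]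
      rfl
    have hUU : Uᵀ * U = 1 := by
      rw [hUt, hU, Equiv.Perm.permMatrix, Equiv.Perm.permMatrix,
        ← PEquiv.toMatrix_trans, ← Equiv.toPEquiv_trans]
      have : (σ⁻¹ : Equiv.Perm (Fin q)).trans σ = Equiv.refl (Fin q) := by
        ext x; simp
      rw [this, Equiv.toPEquiv_refl, PEquiv.toMatrix_refl]
    have h1 := hinv U hUU
    have h2 := congrFun (congrFun h1 i0) i0
    rw [hUt, hU, Equiv.Perm.permMatrix, Equiv.Perm.permMatrix,
      PEquiv.toMatrix_toPEquiv_mul] at h2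
    rw [PEquiv.mul_toMatrix_toPEquiv] at h2
    simp only [Matrix.submatrix_apply, id] at h2
    simpa [hσ, Equiv.swap_apply_left] using h2
  refine ⟨M i0 i0, ?_, ?_⟩
  · have := hpsd.2 (Finsupp.single i0 1)
    simpa [dotProduct, Matrix.mulVec, Pi.single_apply, Finset.mul_sum] using this
  · ext i j
    by_cases h : i = j
    · subst h
      simp [hdiag i, Matrix.one_apply]
    · simp [hoff i j h, Matrix.one_apply, h]

/-- A linear equivariant positive-semidefinite-valued scatter functional maps an
elliptically symmetric distribution with center `0` and scatter matrix `S0` to a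
nonnegative multiple of `S0`. -/
theorem stmt0 (q : ℕ) (hq : 1 ≤ q)
    (Sfun : Measure (Fin q → ℝ) → Matrix (Fin q) (Fin q) ℝ)
    (hpsd : ∀ P : Measure (Fin q → ℝ), IsProbabilityMeasure P → (Sfun P).PosSemidef)
    (hequiv : ∀ P : Measure (Fin q → ℝ), IsProbabilityMeasure P →
      ∀ B : Matrix (Fin q) (Fin q) ℝ, IsUnit B.det →
        Sfun (mapLin P B) = B * Sfun P * Bᵀ)
    (P : Measure (Fin q → ℝ)) [IsProbabilityMeasure P]
    (S0 : Matrix (Fin q) (Fin q) ℝ) (hS0 : S0.PosDef)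
    (hell : EllipticallySymmetric P 0 hS0) :
    ∃ c : ℝ, 0 ≤ c ∧ Sfun P = c • S0 := by
  set A : Matrix (Fin q) (Fin q) ℝ := (hS0.1.eigenvectorUnitary : Matrix (Fin q) (Fin q) ℝ) *
      diagonal (Real.sqrt ∘ hS0.1.eigenvalues) *
      (star hS0.1.eigenvectorUnitary : Matrix (Fin q) (Fin q) ℝ) with hA
  have hAA : A * A = S0 := by
    have hUU : (star hS0.1.eigenvectorUnitary : Matrix (Fin q) (Fin q) ℝ) *
        (hS0.1.eigenvectorUnitary : Matrix (Fin q) (Fin q) ℝ) = 1 :=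
      Unitary.coe_star_mul_self _
    have hDD : diagonal (Real.sqrt ∘ hS0.1.eigenvalues) * diagonal (Real.sqrt ∘ hS0.1.eigenvalues)
        = diagonal hS0.1.eigenvalues := by
      rw [Matrix.diagonal_mul_diagonal]
      congr 1
      funext i
      exact Real.mul_self_sqrt (hS0.eigenvalues_pos i).le
    have hsp := hS0.1.spectral_theorem
    rw [Unitary.conjStarAlgAut_apply] at hsp
    simp only [RCLike.ofReal_real_eq_id, Function.id_comp] at hsp
    rw [hA]
    conv_rhs => rw [hsp]
    rw [← hDD]
    simp only [Matrix.mul_assoc]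
    rw [← Matrix.mul_assoc (star hS0.1.eigenvectorUnitary : Matrix (Fin q) (Fin q) ℝ), hUU,
      Matrix.one_mul]
  have hAdet : IsUnit A.det := by
    have h1 : A.det * A.det = S0.det := by rw [← Matrix.det_mul, hAA]
    have h2 : (0 : ℝ) < S0.det := hS0.det_pos
    refine isUnit_iff_ne_zero.2 fun h => ?_
    rw [h, mul_zero] at h1
    exact h2.ne h1
  have hAinvdet : IsUnit A⁻¹.det := A.isUnit_nonsing_inv_det hAdet
  have hAsymm : Aᵀ = A := by
    have : A.IsHermitian := by
      rw [hA, Matrix.star_eq_conjTranspose]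
      exact Matrix.isHermitian_mul_mul_conjTranspose _ (Matrix.isHermitian_diagonal _)
    rwa [Matrix.IsHermitian, Matrix.conjTranspose_eq_transpose_of_trivial] at this
  -- the "standardized" measure
  set Q : Measure (Fin q → ℝ) := mapLin P A⁻¹ with hQ
  have hQP : IsProbabilityMeasure Q := by
    rw [hQ, mapLin]
    exact Measure.isProbabilityMeasure_map (measurable_mulVec' _).aemeasurable
  have hsph : SphericallySymmetric Q := by
    have : (fun x : Fin q → ℝ => A⁻¹.mulVec (x - 0)) = fun x => A⁻¹.mulVec x := by
      funext x; rw [sub_zero]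
    rw [hQ, mapLin]
    have hell' := hell
    rw [EllipticallySymmetric, this] at hell'
    exact hell'
  -- recover P from Q
  have hQA : mapLin Q A = P := by
    rw [hQ, mapLin, mapLin,
      Measure.map_map (measurable_mulVec' A) (measurable_mulVec' A⁻¹)]
    have : ((fun x : Fin q → ℝ => A.mulVec x) ∘ fun x => A⁻¹.mulVec x) = id := by
      funext x
      simp only [Function.comp_apply, id, Matrix.mulVec_mulVec,
        Matrix.mul_nonsing_inv A hAdet, Matrix.one_mulVec]
    rw [this, Measure.map_id]
  -- Sfun Q is invariant under orthogonal conjugation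
  have hinv : ∀ U : Matrix (Fin q) (Fin q) ℝ, Uᵀ * U = 1 → U * Sfun Q * Uᵀ = Sfun Q := by
    intro U hU
    have hUdet : IsUnit U.det := by
      have h1 : Uᵀ.det * U.det = 1 := by rw [← Matrix.det_mul, hU, Matrix.det_one]
      rw [Matrix.det_transpose] at h1
      exact IsUnit.of_mul_eq_one _ h1
    have := hequiv Q hQP U hUdet
    rw [hsph U hU] at this
    exact this.symm
  obtain ⟨c, hc0, hc⟩ := invariant_eq_smul_one hq (Sfun Q) (hpsd Q hQP) hinv
  refine ⟨c, hc0, ?_⟩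
  have := hequiv Q hQP A hAdet
  rw [hQA, hc, hAsymm] at this
  rw [this, Matrix.mul_smul, Matrix.mul_one, Matrix.smul_mul, hAA]
end

section
/- In Case 0 and in Case 1, for every symmetric matrix A ∈ ℝ^{q×q}, L_ρ(exp(A),Q) = ⟨A, G_ρ(Q)⟩ + R_ρ(A,Q), where the gradient G_ρ(Q) := I_q − Ψ_ρ(Q) is a symmetric matrix and the remainder satisfies |⟨A, G_ρ(Q)⟩| ≤ (q + J(Q))·‖A‖ and |R_ρ(A,Q)| ≤ J(Q)·‖A‖²·exp(‖A‖). -/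
open MeasureTheory Matrix Filter
open scoped ENNReal

/-- Measurable-space structure on matrices (entrywise). -/
instance matMS {m n : Type*} : MeasurableSpace (Matrix m n ℝ) :=
  inferInstanceAs (MeasurableSpace (m → n → ℝ))

/-- `𝕄(V)`: symmetric matrices whose column space is contained in `V`. -/
def MM (q : ℕ) (V : Submodule ℝ (Fin q → ℝ)) : Set (Matrix (Fin q) (Fin q) ℝ) :=
  {M | M.IsSymm ∧ ∀ x, M.mulVec x ∈ V}

/-- The criterion function `L_ρ(Σ, Q)`. -/
noncomputable def Lrho (q : ℕ) (ρ : ℝ → ℝ) (Q : Measure (Matrix (Fin q) (Fin q) ℝ))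
    (S : Matrix (Fin q) (Fin q) ℝ) : ℝ :=
  (∫ M, (ρ (S⁻¹ * M).trace - ρ M.trace) ∂Q) + Real.log S.det

/-- `Ψ_ρ(Σ, Q) = ∫ ρ'(tr(Σ⁻¹M)) M Q(dM)`, defined entrywise, with the integrand
interpreted as the zero matrix when `M = 0`. -/
noncomputable def Psi (q : ℕ) (ρ' : ℝ → ℝ) (Q : Measure (Matrix (Fin q) (Fin q) ℝ))
    (S : Matrix (Fin q) (Fin q) ℝ) : Matrix (Fin q) (Fin q) ℝ :=
  Matrix.of fun i j => ∫ M, (if M = 0 then 0 else ρ' (S⁻¹ * M).trace * M i j) ∂Q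

/-- Standing assumptions on `ρ`: differentiable on `(0,∞)` with continuous, strictly
positive, non-increasing derivative `ρ'`, and `ψ(s) = s·ρ'(s)` non-decreasing. -/
def RhoAss (ρ ρ' : ℝ → ℝ) : Prop :=
  (∀ s : ℝ, 0 < s → HasDerivAt ρ (ρ' s) s) ∧
  ContinuousOn ρ' (Set.Ioi 0) ∧
  (∀ s : ℝ, 0 < s → 0 < ρ' s) ∧
  (∀ s t : ℝ, 0 < s → s ≤ t → ρ' t ≤ ρ' s) ∧
  (∀ s t : ℝ, 0 < s → s ≤ t → s * ρ' s ≤ t * ρ' t)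

/-- Case 0: `Q({0}) = 0` and `ρ(s) = q·log s` for `s > 0`. -/
def Case0 (q : ℕ) (ρ : ℝ → ℝ) (Q : Measure (Matrix (Fin q) (Fin q) ℝ)) : Prop :=
  Q {0} = 0 ∧ ∀ s : ℝ, 0 < s → ρ s = q * Real.log s

/-- Case 1, with `ψb ∈ (q, ∞]` the limit of `ψ(s) = s·ρ'(s)` as `s → ∞`:
`ρ` is continuous at `0`, `ψ` is strictly increasing on `(0,∞)` with limit `0` at `0+`,
and if `ψb = ∞` then moreover `∫ ψ(tr M) Q(dM) < ∞`. -/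
def Case1 (q : ℕ) (ρ ρ' : ℝ → ℝ) (Q : Measure (Matrix (Fin q) (Fin q) ℝ)) (ψb : ℝ≥0∞) :
    Prop :=
  ContinuousWithinAt ρ (Set.Ici 0) 0 ∧
  StrictMonoOn (fun s => s * ρ' s) (Set.Ioi 0) ∧
  Tendsto (fun s => s * ρ' s) (nhdsWithin 0 (Set.Ioi 0)) (nhds 0) ∧
  (q : ℝ≥0∞) < ψb ∧
  (ψb ≠ ⊤ → Tendsto (fun s => s * ρ' s) atTop (nhds ψb.toReal)) ∧
  (ψb = ⊤ → Tendsto (fun s => s * ρ' s) atTop atTop ∧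
      Integrable (fun M : Matrix (Fin q) (Fin q) ℝ => M.trace * ρ' M.trace) Q)

/-- The matrix exponential. -/
noncomputable def mexp {q : ℕ} (A : Matrix (Fin q) (Fin q) ℝ) : Matrix (Fin q) (Fin q) ℝ :=
  NormedSpace.exp A

/-- The spectral (ℓ²-operator) norm of a matrix. -/
noncomputable def specNorm {q : ℕ} (A : Matrix (Fin q) (Fin q) ℝ) : ℝ :=
  ‖LinearMap.toContinuousLinearMap (Matrix.toEuclideanLin A)‖

/-- `J(Q) = ∫ ψ(tr M) Q(dM)` with `ψ(s) = s·ρ'(s)`. -/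
noncomputable def Jq (q : ℕ) (ρ' : ℝ → ℝ) (Q : Measure (Matrix (Fin q) (Fin q) ℝ)) : ℝ :=
  ∫ M, M.trace * ρ' M.trace ∂Q

/-- The gradient `G_ρ(Q) = I_q − Ψ_ρ(Q)`. -/
noncomputable def Gmat (q : ℕ) (ρ' : ℝ → ℝ) (Q : Measure (Matrix (Fin q) (Fin q) ℝ)) :
    Matrix (Fin q) (Fin q) ℝ :=
  1 - Psi q ρ' Q 1

section AuxiliaryLemmas
open Filter Set

lemma exp_aux2 (x : ℝ) (hx : 0 ≤ x) : Real.exp (-x) - 1 + x ≤ x^2/2 := by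
  have hmono : Monotone (fun x : ℝ => x^2/2 - (Real.exp (-x) - 1 + x)) := by
    apply monotone_of_deriv_nonneg
    · fun_prop
    · intro y
      have h : HasDerivAt (fun x : ℝ => x^2/2 - (Real.exp (-x) - 1 + x))
          (y - (-Real.exp (-y) + 1)) y := by
        have h1 : HasDerivAt (fun x : ℝ => Real.exp (-x)) (-Real.exp (-y)) y := by
          simpa using (hasDerivAt_neg y).exp
        have h2 : HasDerivAt (fun x : ℝ => x^2/2) y y := by
          simpa using ((hasDerivAt_pow 2 y).div_const 2)
        exact h2.sub ((h1.sub_const 1).add (hasDerivAt_id y))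
      rw [h.deriv]
      have := Real.add_one_le_exp (-y)
      linarith
  have h0 : (fun x : ℝ => x^2/2 - (Real.exp (-x) - 1 + x)) 0 = 0 := by simp
  have := hmono hx
  simp only [h0] at this
  linarith [this]

lemma exp_aux1 (x : ℝ) (hx : 0 ≤ x) : Real.exp x - 1 - x ≤ x^2/2 * Real.exp x := by
  have hmono : Monotone (fun x : ℝ => x^2/2 * Real.exp x - (Real.exp x - 1 - x)) := by
    apply monotone_of_deriv_nonneg
    · fun_prop
    · intro y
      have h : HasDerivAt (fun x : ℝ => x^2/2 * Real.exp x - (Real.exp x - 1 - x))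
          ((y * Real.exp y + y^2/2 * Real.exp y) - (Real.exp y - 1)) y := by
        have h2 : HasDerivAt (fun x : ℝ => x^2/2) y y := by
          simpa using ((hasDerivAt_pow 2 y).div_const 2)
        have h3 := h2.mul (Real.hasDerivAt_exp y)
        exact h3.sub (((Real.hasDerivAt_exp y).sub_const 1).sub (hasDerivAt_id y))
      rw [h.deriv]
      have h5 := Real.add_one_le_exp (-y)
      have h6 : Real.exp (-y) * Real.exp y = 1 := by
        rw [← Real.exp_add]; simp
      have h7 : (1 - y) * Real.exp y ≤ 1 := by
        nlinarith [Real.exp_pos y]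
      nlinarith [Real.exp_pos y, sq_nonneg y]
  have h0 : (fun x : ℝ => x^2/2 * Real.exp x - (Real.exp x - 1 - x)) 0 = 0 := by simp
  have := hmono hx
  simp only [h0] at this
  linarith [this]

/-- for |λ| ≤ a : e^{-λ} - 1 + λ ≤ a²/2 e^a, and ≥ 0 -/
lemma exp_quad (lam a : ℝ) (hl : |lam| ≤ a) :
    0 ≤ Real.exp (-lam) - 1 + lam ∧ Real.exp (-lam) - 1 + lam ≤ a^2/2 * Real.exp a := by
  have ha : 0 ≤ a := le_trans (abs_nonneg _) hl
  constructor
  · have := Real.add_one_le_exp (-lam); linarith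
  · rcases le_or_gt 0 lam with h | h
    · have h1 := exp_aux2 lam h
      have h2 : lam ^ 2 ≤ a ^ 2 := by
        have := abs_le.mp hl; nlinarith
      have h3 : (1:ℝ) ≤ Real.exp a := Real.one_le_exp ha
      nlinarith
    · have hx : 0 ≤ -lam := by linarith
      have h1 := exp_aux1 (-lam) hx
      have h2 : (-lam) ^ 2 ≤ a ^ 2 := by
        have := abs_le.mp hl; nlinarith
      have h3 : Real.exp (-lam) ≤ Real.exp a := Real.exp_le_exp.mpr (by cases abs_le.mp hl; linarith)
      have h4 : (0:ℝ) < Real.exp (-lam) := Real.exp_pos _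
      calc Real.exp (-lam) - 1 + lam = Real.exp (-lam) - 1 - (-lam) := by ring
        _ ≤ (-lam)^2/2 * Real.exp (-lam) := h1
        _ ≤ a^2/2 * Real.exp a := by nlinarith
  


/-- concavity upper bound -/
lemma rho_concave {ρ ρ' : ℝ → ℝ} (hρ : RhoAss ρ ρ') {s₀ s₁ : ℝ} (h0 : 0 < s₀) (h1 : 0 < s₁) :
    ρ s₁ - ρ s₀ ≤ ρ' s₀ * (s₁ - s₀) := by
  obtain ⟨hd, _, hpos, hdec, hmono⟩ := hρ
  rcases lt_trichotomy s₀ s₁ with h | h | h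
  · obtain ⟨c, hc, hceq⟩ := exists_hasDerivAt_eq_slope ρ ρ' h
      (fun x hx => (hd x (lt_of_lt_of_le h0 hx.1)).continuousAt.continuousWithinAt)
      (fun x hx => hd x (lt_trans h0 hx.1))
    have : ρ' c ≤ ρ' s₀ := hdec _ _ h0 (le_of_lt hc.1)
    have hss : 0 < s₁ - s₀ := by linarith
    have := hceq ▸ this
    calc ρ s₁ - ρ s₀ = ((ρ s₁ - ρ s₀)/(s₁ - s₀)) * (s₁ - s₀) := by field_simp
      _ ≤ ρ' s₀ * (s₁ - s₀) := by
          apply mul_le_mul_of_nonneg_right _ (le_of_lt hss)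
          rw [← hceq]; exact hdec _ _ h0 (le_of_lt hc.1)
  · simp [h]
  · obtain ⟨c, hc, hceq⟩ := exists_hasDerivAt_eq_slope ρ ρ' h
      (fun x hx => (hd x (lt_of_lt_of_le h1 hx.1)).continuousAt.continuousWithinAt)
      (fun x hx => hd x (lt_trans h1 hx.1))
    have hss : 0 < s₀ - s₁ := by linarith
    have hc0 : ρ' s₀ ≤ ρ' c := hdec _ _ (lt_trans h1 hc.1) (le_of_lt hc.2)
    have : ρ s₀ - ρ s₁ = ρ' c * (s₀ - s₁) := by
      field_simp at hceq; linarith [hceq]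
    nlinarith

/-- log lower bound -/
lemma rho_log_lb {ρ ρ' : ℝ → ℝ} (hρ : RhoAss ρ ρ') {s₀ s₁ : ℝ} (h0 : 0 < s₀) (h1 : 0 < s₁) :
    s₀ * ρ' s₀ * (Real.log s₁ - Real.log s₀) ≤ ρ s₁ - ρ s₀ := by
  obtain ⟨hd, _, hpos, hdec, hmono⟩ := hρ
  set ψ₀ := s₀ * ρ' s₀ with hψ₀
  set u : ℝ → ℝ := fun s => ρ s - ψ₀ * Real.log s with hu
  have hdu : ∀ c : ℝ, 0 < c → HasDerivAt u (ρ' c - ψ₀ / c) c := by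
    intro c hc
    have := ((Real.hasDerivAt_log (ne_of_gt hc)).const_mul ψ₀)
    have h2 : ψ₀ * c⁻¹ = ψ₀ / c := by field_simp
    exact (hd c hc).sub (h2 ▸ this)
  have goal : u s₀ ≤ u s₁ := by
    rcases lt_trichotomy s₀ s₁ with h | h | h
    · obtain ⟨c, hc, hceq⟩ := exists_hasDerivAt_eq_slope u (fun c => ρ' c - ψ₀ / c) h
        (fun x hx => (hdu x (lt_of_lt_of_le h0 hx.1)).continuousAt.continuousWithinAt)
        (fun x hx => hdu x (lt_trans h0 hx.1))
      have hcpos : 0 < c := lt_trans h0 hc.1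
      have hle : ψ₀ ≤ c * ρ' c := hmono _ _ h0 (le_of_lt hc.1)
      have hnn : 0 ≤ ρ' c - ψ₀ / c := by
        rw [sub_nonneg, div_le_iff₀ hcpos]; linarith
      have hss : 0 < s₁ - s₀ := by linarith
      have heq : u s₁ - u s₀ = (ρ' c - ψ₀ / c) * (s₁ - s₀) := by
        rw [hceq]; field_simp
      have hfin : 0 ≤ u s₁ - u s₀ := heq ▸ mul_nonneg hnn hss.le
      exact sub_nonneg.mp hfin
    · simp [h]
    · obtain ⟨c, hc, hceq⟩ := exists_hasDerivAt_eq_slope u (fun c => ρ' c - ψ₀ / c) h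
        (fun x hx => (hdu x (lt_of_lt_of_le h1 hx.1)).continuousAt.continuousWithinAt)
        (fun x hx => hdu x (lt_trans h1 hx.1))
      have hcpos : 0 < c := lt_trans h1 hc.1
      have h2 : c * ρ' c ≤ ψ₀ := hmono _ _ hcpos (le_of_lt hc.2)
      have hnp : ρ' c - ψ₀ / c ≤ 0 := by
        rw [sub_nonpos, le_div_iff₀ hcpos]; linarith
      have hss : 0 < s₀ - s₁ := by linarith
      have heq : u s₀ - u s₁ = (ρ' c - ψ₀ / c) * (s₀ - s₁) := by
        rw [hceq]; field_simp
      have hfin : u s₀ - u s₁ ≤ 0 := heq ▸ mul_nonpos_of_nonpos_of_nonneg hnp hss.le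
      exact sub_nonpos.mp hfin
  simp only [hu] at goal
  linarith [goal]

lemma jensen_sum {n : ℕ} (m lam : Fin n → ℝ) (hm : ∀ i, 0 ≤ m i)
    (hs : 0 < ∑ i, m i) :
    -(∑ i, lam i * m i) ≤ (∑ i, m i) * (Real.log (∑ i, m i * Real.exp (-lam i)) -
      Real.log (∑ i, m i)) := by
  set s₀ := ∑ i, m i with hs₀
  set s₁ := ∑ i, m i * Real.exp (-lam i) with hs₁
  have hs1 : 0 < s₁ := by
    have h1 : ∀ i ∈ Finset.univ, 0 ≤ m i * Real.exp (-lam i) := fun i _ =>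
      mul_nonneg (hm i) (Real.exp_pos _).le
    -- there is some i with m i > 0
    have : ∃ i ∈ Finset.univ, 0 < m i := by
      by_contra hcon
      push_neg at hcon
      have : s₀ ≤ 0 := Finset.sum_nonpos (fun i hi => hcon i hi)
      linarith
    obtain ⟨i, _, hi⟩ := this
    exact Finset.sum_pos' h1 ⟨i, Finset.mem_univ i, mul_pos hi (Real.exp_pos _)⟩
  have hgm := Real.geom_mean_le_arith_mean_weighted Finset.univ
    (fun i => m i / s₀) (fun i => Real.exp (-lam i))
    (fun i _ => div_nonneg (hm i) hs.le)
    (by rw [← Finset.sum_div]; field_simp; rfl)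
    (fun i _ => (Real.exp_pos _).le)
  have hprod : (∏ i, Real.exp (-lam i) ^ (m i / s₀)) =
      Real.exp (∑ i, -lam i * (m i / s₀)) := by
    rw [Real.exp_sum]
    congr 1
    funext i
    rw [← Real.exp_mul]
  have hsum : (∑ i, m i / s₀ * Real.exp (-lam i)) = s₁ / s₀ := by
    rw [hs₁, Finset.sum_div]
    congr 1; funext i; ring
  rw [hprod, hsum] at hgm
  have hlog := Real.log_le_log (Real.exp_pos _) hgm
  rw [Real.log_exp, Real.log_div (ne_of_gt hs1) (ne_of_gt hs)] at hlog
  have hsum2 : (∑ i, -lam i * (m i / s₀)) = (-(∑ i, lam i * m i)) / s₀ := by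
    rw [← Finset.sum_neg_distrib, Finset.sum_div]
    congr 1; funext i; ring
  rw [hsum2] at hlog
  have := (div_le_iff₀ hs).mp hlog
  linarith [this]

lemma key_vec {ρ ρ' : ℝ → ℝ} (hρ : RhoAss ρ ρ') {n : ℕ} (m lam : Fin n → ℝ)
    (hm : ∀ i, 0 ≤ m i) (a : ℝ) (ha : 0 ≤ a) (hlam : ∀ i, |lam i| ≤ a)
    (hs : 0 < ∑ i, m i) :
    0 ≤ ρ (∑ i, m i * Real.exp (-lam i)) - ρ (∑ i, m i)
        + ρ' (∑ i, m i) * (∑ i, lam i * m i) ∧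
    ρ (∑ i, m i * Real.exp (-lam i)) - ρ (∑ i, m i)
        + ρ' (∑ i, m i) * (∑ i, lam i * m i)
      ≤ (∑ i, m i) * ρ' (∑ i, m i) * (a^2 * Real.exp a) := by
  have hρ' := hρ
  obtain ⟨hd, _, hpos, hdec, hmono⟩ := hρ'
  set s₀ := ∑ i, m i with hs₀
  set s₁ := ∑ i, m i * Real.exp (-lam i) with hs₁
  have hs1 : 0 < s₁ := by
    have h1 : ∀ i ∈ Finset.univ, 0 ≤ m i * Real.exp (-lam i) := fun i _ =>
      mul_nonneg (hm i) (Real.exp_pos _).le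
    have : ∃ i ∈ Finset.univ, 0 < m i := by
      by_contra hcon
      push_neg at hcon
      have : s₀ ≤ 0 := Finset.sum_nonpos (fun i hi => hcon i hi)
      linarith
    obtain ⟨i, _, hi⟩ := this
    exact Finset.sum_pos' h1 ⟨i, Finset.mem_univ i, mul_pos hi (Real.exp_pos _)⟩
  have hρ'pos : 0 < ρ' s₀ := hpos _ hs
  constructor
  · have h1 := rho_log_lb hρ hs hs1
    have h2 := jensen_sum m lam hm hs
    -- ρ s₁ - ρ s₀ ≥ s₀ρ'(s₀)(log s₁ - log s₀) ≥ ρ'(s₀)·(-∑λm)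
    have h3 : ρ' s₀ * (-(∑ i, lam i * m i)) ≤ ρ' s₀ * (s₀ * (Real.log s₁ - Real.log s₀)) :=
      mul_le_mul_of_nonneg_left h2 hρ'pos.le
    have h4 : ρ' s₀ * (s₀ * (Real.log s₁ - Real.log s₀)) = s₀ * ρ' s₀ * (Real.log s₁ - Real.log s₀) := by ring
    linarith [h1, h3, h4 ▸ h3]
  · have h1 := rho_concave hρ hs hs1
    have h2 : s₁ - s₀ + (∑ i, lam i * m i) = ∑ i, m i * (Real.exp (-lam i) - 1 + lam i) := by
      rw [hs₁, hs₀, ← Finset.sum_sub_distrib, ← Finset.sum_add_distrib]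
      congr 1; funext i; ring
    have h3 : (∑ i, m i * (Real.exp (-lam i) - 1 + lam i)) ≤ ∑ i, m i * (a^2/2 * Real.exp a) := by
      apply Finset.sum_le_sum
      intro i _
      exact mul_le_mul_of_nonneg_left (exp_quad (lam i) a (hlam i)).2 (hm i)
    have h4 : (∑ i, m i * (a^2/2 * Real.exp a)) = s₀ * (a^2/2 * Real.exp a) := by
      rw [← Finset.sum_mul]
    have h5 : ρ s₁ - ρ s₀ + ρ' s₀ * (∑ i, lam i * m i)
        ≤ ρ' s₀ * (s₁ - s₀ + (∑ i, lam i * m i)) := by nlinarith [h1]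
    have h6 : ρ' s₀ * (s₁ - s₀ + (∑ i, lam i * m i)) ≤ ρ' s₀ * (s₀ * (a^2/2 * Real.exp a)) := by
      apply mul_le_mul_of_nonneg_left _ hρ'pos.le
      rw [h2]; linarith [h3, h4 ▸ h3]
    have h7 : ρ' s₀ * (s₀ * (a^2/2 * Real.exp a)) = s₀ * ρ' s₀ * (a^2/2 * Real.exp a) := by
      ring
    have h8 : a^2/2 * Real.exp a ≤ a^2 * Real.exp a := by
      have hexp : 0 < Real.exp a := Real.exp_pos a
      nlinarith [sq_nonneg a]
    have h9 : s₀ * ρ' s₀ * (a^2/2 * Real.exp a) ≤ s₀ * ρ' s₀ * (a^2 * Real.exp a) :=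
      mul_le_mul_of_nonneg_left h8 (mul_nonneg hs.le hρ'pos.le)
    linarith

lemma specNorm_nonneg {q : ℕ} (A : Matrix (Fin q) (Fin q) ℝ) : 0 ≤ specNorm A :=
  norm_nonneg _

lemma eigen_pack {q : ℕ} (A : Matrix (Fin q) (Fin q) ℝ) (hA : A.IsSymm) :
    ∃ (U : Matrix (Fin q) (Fin q) ℝ) (lam : Fin q → ℝ),
      U * star U = 1 ∧ star U * U = 1 ∧
      A = U * diagonal lam * star U ∧
      (∀ i, |lam i| ≤ specNorm A) := by
  have hH : A.IsHermitian := by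
    rw [Matrix.IsHermitian, conjTranspose_eq_transpose_of_trivial]
    exact hA
  refine ⟨(hH.eigenvectorUnitary : Matrix (Fin q) (Fin q) ℝ), hH.eigenvalues, ?_, ?_, ?_, ?_⟩
  · exact mem_unitaryGroup_iff.mp hH.eigenvectorUnitary.2
  · exact mem_unitaryGroup_iff'.mp hH.eigenvectorUnitary.2
  · have := hH.spectral_theorem
    simpa using this
  · intro i
    have hv := hH.mulVec_eigenvectorBasis i
    set v : EuclideanSpace ℝ (Fin q) := hH.eigenvectorBasis i with hvdef
    have hnv : ‖v‖ = 1 := hH.eigenvectorBasis.orthonormal.1 i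
    have happ : (Matrix.toEuclideanLin A) v = hH.eigenvalues i • v := by
      rw [Matrix.toEuclideanLin_apply]
      rw [hv]
      rfl
    have hle := (LinearMap.toContinuousLinearMap (Matrix.toEuclideanLin A)).le_opNorm v
    rw [LinearMap.coe_toContinuousLinearMap', happ] at hle
    rw [norm_smul, hnv, Real.norm_eq_abs] at hle
    rw [mul_one, mul_one] at hle
    exact hle

lemma mexp_pack {q : ℕ} (A U : Matrix (Fin q) (Fin q) ℝ) (lam : Fin q → ℝ)
    (h1 : U * star U = 1) (h2 : star U * U = 1)
    (hAeq : A = U * diagonal lam * star U) :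
    mexp A = U * diagonal (fun i => Real.exp (lam i)) * star U ∧
    (mexp A)⁻¹ = U * diagonal (fun i => Real.exp (-lam i)) * star U ∧
    Real.log (mexp A).det = A.trace ∧
    A.trace = ∑ i, lam i := by
  have hUinv : U⁻¹ = star U := inv_eq_right_inv h1
  have hUnit : IsUnit U := ⟨⟨U, star U, h1, h2⟩, rfl⟩
  have hexp : mexp A = U * diagonal (fun i => Real.exp (lam i)) * star U := by
    rw [mexp, hAeq, ← hUinv, Matrix.exp_conj U (diagonal lam) hUnit, Matrix.exp_diagonal, hUinv]
    congr 2
    rw [Pi.exp_def]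
    funext i
    rw [← Real.exp_eq_exp_ℝ]
  have hprod : ∀ d d' : Fin q → ℝ,
      (U * diagonal d * star U) * (U * diagonal d' * star U)
        = U * diagonal (fun i => d i * d' i) * star U := by
    intro d d'
    calc (U * diagonal d * star U) * (U * diagonal d' * star U)
        = U * diagonal d * (star U * U) * (diagonal d' * star U) := by
          simp only [Matrix.mul_assoc]
      _ = U * (diagonal d * diagonal d') * star U := by
          rw [h2]; simp only [Matrix.mul_one, Matrix.mul_assoc]
      _ = U * diagonal (fun i => d i * d' i) * star U := by
          rw [diagonal_mul_diagonal]
  have hinv : (mexp A)⁻¹ = U * diagonal (fun i => Real.exp (-lam i)) * star U := by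
    apply inv_eq_right_inv
    rw [hexp, hprod]
    have : (fun i => Real.exp (lam i) * Real.exp (-lam i)) = fun _ => (1:ℝ) := by
      funext i; rw [← Real.exp_add]; simp
    rw [this, diagonal_one, Matrix.mul_one, h1]
  have htr : A.trace = ∑ i, lam i := by
    rw [hAeq, trace_mul_cycle, h2, Matrix.one_mul, trace_diagonal]
  have hdet : Real.log (mexp A).det = A.trace := by
    have hUdet : U.det * (star U).det = 1 := by rw [← det_mul, h1, det_one]
    rw [hexp, det_mul, det_mul, det_diagonal,
      show U.det * (∏ i, Real.exp (lam i)) * (star U).det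
        = (U.det * (star U).det) * ∏ i, Real.exp (lam i) from by ring,
      hUdet, one_mul, ← Real.exp_sum, Real.log_exp, htr]
  exact ⟨hexp, hinv, hdet, htr⟩

lemma trace_conj_diag {q : ℕ} (U M : Matrix (Fin q) (Fin q) ℝ) (d : Fin q → ℝ) :
    ((U * diagonal d * star U) * M).trace = ∑ i, d i * (star U * M * U) i i := by
  calc ((U * diagonal d * star U) * M).trace
      = ((U * diagonal d) * (star U * M)).trace := by rw [Matrix.mul_assoc]
    _ = ((star U * M) * (U * diagonal d)).trace := trace_mul_comm _ _
    _ = ((star U * M * U) * diagonal d).trace := by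
        simp only [Matrix.mul_assoc]
    _ = ∑ i, d i * (star U * M * U) i i := by
        simp [Matrix.trace, Matrix.diag, mul_diagonal, mul_comm]

lemma trace_conj_sum {q : ℕ} (U M : Matrix (Fin q) (Fin q) ℝ)
    (h1 : U * star U = 1) : M.trace = ∑ i, (star U * M * U) i i := by
  have : (star U * M * U).trace = M.trace := by
    rw [trace_mul_cycle, h1, Matrix.one_mul]
  rw [← this]
  rfl

lemma conj_diag_nonneg {q : ℕ} {M : Matrix (Fin q) (Fin q) ℝ} (hM : M.PosSemidef)
    (U : Matrix (Fin q) (Fin q) ℝ) (i : Fin q) : 0 ≤ (star U * M * U) i i := by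
  have h := hM.dotProduct_mulVec_nonneg (fun j => U j i)
  have heq : (star U * M * U) i i = dotProduct (star (fun j => U j i)) (M *ᵥ (fun j => U j i)) := by
    simp only [Matrix.mul_apply, Matrix.star_apply, star_trivial, dotProduct, Matrix.mulVec,
      Finset.sum_mul, Finset.mul_sum]
    rw [Finset.sum_comm]
    apply Finset.sum_congr rfl
    intro k _
    apply Finset.sum_congr rfl
    intro j _
    ring
  rw [heq]
  exact h

lemma psd_diag_nonneg {q : ℕ} {M : Matrix (Fin q) (Fin q) ℝ} (hM : M.PosSemidef) (i : Fin q) :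
    0 ≤ M i i := by
  have h := hM.dotProduct_mulVec_nonneg (Pi.single i 1)
  simpa [dotProduct, Matrix.mulVec, Pi.single_apply] using h

lemma psd_trace_nonneg {q : ℕ} {M : Matrix (Fin q) (Fin q) ℝ} (hM : M.PosSemidef) :
    0 ≤ M.trace :=
  Finset.sum_nonneg (fun i _ => psd_diag_nonneg hM i)

lemma psd_entry_abs_le {q : ℕ} {M : Matrix (Fin q) (Fin q) ℝ} (hM : M.PosSemidef)
    (i j : Fin q) : |M i j| ≤ M.trace := by
  rcases eq_or_ne i j with rfl | hij
  · rw [abs_of_nonneg (psd_diag_nonneg hM i)]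
    exact Finset.single_le_sum (fun k _ => psd_diag_nonneg hM k) (Finset.mem_univ i)
  · have hsym : M j i = M i j := by
      have := congrFun (congrFun hM.1 i) j
      simpa [Matrix.conjTranspose_apply] using this
    have hquad : ∀ c : ℝ, 0 ≤ M i i + c * (M i j + M j i) + c^2 * M j j := by
      intro c
      have h := hM.dotProduct_mulVec_nonneg (Pi.single i 1 + Pi.single j (c:ℝ))
      have heq : dotProduct (star (Pi.single i 1 + Pi.single j (c:ℝ)))
          (M *ᵥ (Pi.single i 1 + Pi.single j (c:ℝ)))
          = M i i + c * (M i j + M j i) + c^2 * M j j := by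
        simp [dotProduct, Matrix.mulVec, Pi.single_apply, Finset.mul_sum, Finset.sum_add_distrib,
          hij, Ne.symm hij, mul_add, add_mul]
        ring
      rw [heq] at h
      exact h
    have h1 := hquad 1
    have h2 := hquad (-1)
    have hii := psd_diag_nonneg hM i
    have hjj := psd_diag_nonneg hM j
    have htr2 : M i i + M j j ≤ M.trace := by
      have := Finset.sum_le_sum_of_subset_of_nonneg
        (Finset.insert_subset_iff.mpr ⟨Finset.mem_univ i, Finset.singleton_subset_iff.mpr (Finset.mem_univ j)⟩)
        (fun k _ _ => psd_diag_nonneg hM k)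
      rw [Finset.sum_insert (by simpa using hij), Finset.sum_singleton] at this
      exact this
    rw [abs_le]
    constructor <;> nlinarith [hsym]


lemma meas_indicator_cont {f : ℝ → ℝ} {U : Set ℝ} (hU : IsOpen U)
    (hf : ContinuousOn f U) : Measurable (U.indicator f) := by
  apply measurable_of_isOpen
  intro t ht
  by_cases h0 : (0:ℝ) ∈ t
  · have : (U.indicator f) ⁻¹' t = (U ∩ f ⁻¹' t) ∪ Uᶜ := by
      ext x
      by_cases hx : x ∈ U <;> simp [Set.indicator_apply, hx, h0]
    rw [this]
    exact ((hf.isOpen_inter_preimage hU ht).measurableSet).union hU.measurableSet.compl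
  · have : (U.indicator f) ⁻¹' t = (U ∩ f ⁻¹' t) := by
      ext x
      by_cases hx : x ∈ U <;> simp [Set.indicator_apply, hx, h0]
    rw [this]
    exact (hf.isOpen_inter_preimage hU ht).measurableSet

section Aux
open Matrix

lemma trace_transpose_mul_apply {q : ℕ} (A B : Matrix (Fin q) (Fin q) ℝ) :
    (Aᵀ * B).trace = ∑ i, ∑ j, A j i * B j i := by
  simp [Matrix.trace, Matrix.diag, Matrix.mul_apply, Matrix.transpose_apply]

lemma psd_zero_or_pos {q : ℕ} {M : Matrix (Fin q) (Fin q) ℝ} (hM : M.PosSemidef) :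
    M = 0 ∨ 0 < M.trace := by
  rcases eq_or_lt_of_le (psd_trace_nonneg hM) with h | h
  · left
    ext i j
    have := psd_entry_abs_le hM i j
    rw [← h] at this
    have h2 : |M i j| = 0 := le_antisymm this (abs_nonneg _)
    simpa using abs_eq_zero.mp h2
  · right; exact h

end Aux

end AuxiliaryLemmas

/-- First-order expansion of `L_ρ(exp(A), Q)`: in Case 0 and in Case 1, the gradient
`G_ρ(Q)` is symmetric and, for every symmetric `A`, the linear term satisfies
`|⟨A, G_ρ(Q)⟩| ≤ (q + J(Q))‖A‖` and the remainder `R_ρ(A,Q) = L_ρ(exp A, Q) − ⟨A, G_ρ(Q)⟩`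
satisfies `|R_ρ(A,Q)| ≤ J(Q)·‖A‖²·e^{‖A‖}`. -/
theorem stmt9 (q : ℕ) (hq : 1 ≤ q) (ρ ρ' : ℝ → ℝ) (hρ : RhoAss ρ ρ')
    (Q : Measure (Matrix (Fin q) (Fin q) ℝ)) [IsProbabilityMeasure Q]
    (hQpsd : ∀ᵐ M ∂Q, M.PosSemidef)
    (hcase : Case0 q ρ Q ∨ ∃ ψb : ℝ≥0∞, Case1 q ρ ρ' Q ψb) :
    (Gmat q ρ' Q).IsSymm ∧
    ∀ A : Matrix (Fin q) (Fin q) ℝ, A.IsSymm →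
      |((Aᵀ * Gmat q ρ' Q).trace)| ≤ ((q : ℝ) + Jq q ρ' Q) * specNorm A ∧
      |Lrho q ρ Q (mexp A) - (Aᵀ * Gmat q ρ' Q).trace|
        ≤ Jq q ρ' Q * specNorm A ^ 2 * Real.exp (specNorm A) := by
  classical
  obtain ⟨hd, hρ'c, hρ'pos, hρ'dec, hψm⟩ := hρ
  have hρfull : RhoAss ρ ρ' := ⟨hd, hρ'c, hρ'pos, hρ'dec, hψm⟩
  have hentry : ∀ i j : Fin q, Measurable (fun M : Matrix (Fin q) (Fin q) ℝ => M i j) :=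
    fun i j => (measurable_pi_apply j).comp (measurable_pi_apply i)
  have htrmeas : Measurable (fun M : Matrix (Fin q) (Fin q) ℝ => M.trace) := by
    have h : (fun M : Matrix (Fin q) (Fin q) ℝ => M.trace) = fun M => ∑ i, M i i := by
      funext M; rfl
    rw [h]
    exact Finset.measurable_sum _ (fun i _ => hentry i i)
  have htrmulmeas : ∀ B : Matrix (Fin q) (Fin q) ℝ,
      Measurable (fun M : Matrix (Fin q) (Fin q) ℝ => (B * M).trace) := by
    intro B
    have h : (fun M : Matrix (Fin q) (Fin q) ℝ => (B * M).trace)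
        = fun M => ∑ i, ∑ j, B i j * M j i := by
      funext M; simp [Matrix.trace, Matrix.diag, Matrix.mul_apply]
    rw [h]
    exact Finset.measurable_sum _ (fun i _ =>
      Finset.measurable_sum _ (fun j _ => (hentry j i).const_mul _))
  have hρcontOn : ContinuousOn ρ (Set.Ioi 0) :=
    fun s hs => ((hd s hs).continuousAt).continuousWithinAt
  set rhoh : ℝ → ℝ := (Set.Ioi (0:ℝ)).indicator ρ with hrhoh
  set rho'h : ℝ → ℝ := (Set.Ioi (0:ℝ)).indicator ρ' with hrho'h
  have hmρ : Measurable rhoh := meas_indicator_cont isOpen_Ioi hρcontOn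
  have hmρ' : Measurable rho'h := meas_indicator_cont isOpen_Ioi hρ'c
  set ψf : Matrix (Fin q) (Fin q) ℝ → ℝ := fun M => M.trace * ρ' M.trace with hψfdef
  have hJq : Jq q ρ' Q = ∫ M, ψf M ∂Q := rfl
  have hψf_ae : ψf =ᵐ[Q] (fun M => M.trace * rho'h M.trace) := by
    filter_upwards [hQpsd] with M hM
    rcases psd_zero_or_pos hM with h0 | hpos
    · rw [h0]; simp [ψf]
    · show M.trace * ρ' M.trace = M.trace * rho'h M.trace
      rw [hrho'h, Set.indicator_of_mem (Set.mem_Ioi.mpr hpos)]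
  have hψfAESM : AEStronglyMeasurable ψf Q :=
    ((htrmeas.mul (hmρ'.comp htrmeas)).aestronglyMeasurable).congr hψf_ae.symm
  have hψf_nn : ∀ M : Matrix (Fin q) (Fin q) ℝ, M.PosSemidef → 0 ≤ ψf M := by
    intro M hM
    rcases psd_zero_or_pos hM with h0 | hpos
    · rw [h0]; simp [ψf]
    · exact (mul_pos hpos (hρ'pos _ hpos)).le
  have hψint : Integrable ψf Q := by
    rcases hcase with hc0 | ⟨ψb, hc1⟩
    · have hρ'eq : ∀ s : ℝ, 0 < s → ρ' s = q / s := by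
        intro s hs
        have h1 : HasDerivAt (fun t => (q:ℝ) * Real.log t) ((q:ℝ) * s⁻¹) s :=
          (Real.hasDerivAt_log (ne_of_gt hs)).const_mul (q:ℝ)
        have hev : ρ =ᶠ[nhds s] (fun t => (q:ℝ) * Real.log t) := by
          filter_upwards [Ioi_mem_nhds hs] with t ht
          exact hc0.2 t ht
        have h3 : HasDerivAt ρ ((q:ℝ) * s⁻¹) s := h1.congr_of_eventuallyEq hev
        rw [div_eq_mul_inv]
        exact (hd s hs).unique h3
      have hne : ∀ᵐ M ∂Q, M ≠ 0 := by
        have hset : {M : Matrix (Fin q) (Fin q) ℝ | ¬ M ≠ 0} = {0} := by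
          ext M; simp
        rw [MeasureTheory.ae_iff, hset]
        exact hc0.1
      apply (integrable_const (q:ℝ)).congr
      filter_upwards [hQpsd, hne] with M hM hMne
      have hpos : 0 < M.trace := by
        rcases psd_zero_or_pos hM with h0 | hpos
        · exact absurd h0 hMne
        · exact hpos
      show (q:ℝ) = M.trace * ρ' M.trace
      rw [hρ'eq _ hpos]
      field_simp
    · by_cases hψb : ψb = ⊤
      · exact (hc1.2.2.2.2.2 hψb).2
      · have htends := hc1.2.2.2.2.1 hψb
        have hble : ∀ s : ℝ, 0 < s → s * ρ' s ≤ ψb.toReal := by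
          intro s hs
          refine ge_of_tendsto htends ?_
          filter_upwards [eventually_ge_atTop s] with t ht
          exact hψm s t hs ht
        refine Integrable.mono' (integrable_const ψb.toReal) hψfAESM ?_
        filter_upwards [hQpsd] with M hM
        rcases psd_zero_or_pos hM with h0 | hpos
        · rw [h0]; simp [ψf, ENNReal.toReal_nonneg]
        · rw [Real.norm_eq_abs, abs_of_nonneg (hψf_nn M hM)]
          exact hble _ hpos
  have hGsymm : (Gmat q ρ' Q).IsSymm := by
    have hPsiSymm : (Psi q ρ' Q 1)ᵀ = Psi q ρ' Q 1 := by
      ext i j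
      simp only [Matrix.transpose_apply, Psi, Matrix.of_apply]
      apply integral_congr_ae
      filter_upwards [hQpsd] with M hM
      by_cases h0 : M = 0
      · simp [h0]
      · simp only [if_neg h0]
        have hsym : M j i = M i j := by
          have h2 := congrFun (congrFun hM.1 i) j
          simpa [Matrix.conjTranspose_apply] using h2
        rw [hsym]
    rw [Matrix.IsSymm, Gmat, Matrix.transpose_sub, Matrix.transpose_one, hPsiSymm]
  refine ⟨hGsymm, ?_⟩
  intro A hA
  have ha0 : 0 ≤ specNorm A := specNorm_nonneg A
  obtain ⟨U, lam, hU1, hU2, hAeq, hlam⟩ := eigen_pack A hA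
  obtain ⟨hexpA, hinvA, hlogdet, htrA⟩ := mexp_pack A U lam hU1 hU2 hAeq
  have hATeq : Aᵀ = A := hA
  have s1eq : ∀ M : Matrix (Fin q) (Fin q) ℝ,
      ((mexp A)⁻¹ * M).trace = ∑ i, (star U * M * U) i i * Real.exp (-lam i) := by
    intro M
    rw [hinvA, trace_conj_diag]
    exact Finset.sum_congr rfl (fun i _ => mul_comm _ _)
  have s0eq : ∀ M : Matrix (Fin q) (Fin q) ℝ, M.trace = ∑ i, (star U * M * U) i i :=
    fun M => trace_conj_sum U M hU1
  have tAMeq : ∀ M : Matrix (Fin q) (Fin q) ℝ,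
      (Aᵀ * M).trace = ∑ i, lam i * (star U * M * U) i i := by
    intro M
    rw [hATeq]
    conv_lhs => rw [hAeq]
    exact trace_conj_diag U M lam
  have htrAbound : |A.trace| ≤ (q:ℝ) * specNorm A := by
    rw [htrA]
    calc |∑ i, lam i| ≤ ∑ i, |lam i| := Finset.abs_sum_le_sum_abs _ _
      _ ≤ ∑ _i : Fin q, specNorm A := Finset.sum_le_sum (fun i _ => hlam i)
      _ = (q:ℝ) * specNorm A := by
          rw [Finset.sum_const, Finset.card_univ, Fintype.card_fin, nsmul_eq_mul]
  set f₁ : Matrix (Fin q) (Fin q) ℝ → ℝ :=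
    fun M => ρ ((mexp A)⁻¹ * M).trace - ρ M.trace with hf₁def
  set g₁ : Matrix (Fin q) (Fin q) ℝ → ℝ :=
    fun M => if M = 0 then 0 else ρ' M.trace * (Aᵀ * M).trace with hg₁def
  have htampos : ∀ M : Matrix (Fin q) (Fin q) ℝ, M.PosSemidef →
      |(Aᵀ * M).trace| ≤ specNorm A * M.trace := by
    intro M hM
    have hm : ∀ i, 0 ≤ (star U * M * U) i i := conj_diag_nonneg hM U
    rw [tAMeq]
    calc |∑ i, lam i * (star U * M * U) i i|
        ≤ ∑ i, |lam i * (star U * M * U) i i| := Finset.abs_sum_le_sum_abs _ _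
      _ ≤ ∑ i, specNorm A * (star U * M * U) i i := by
          refine Finset.sum_le_sum (fun i _ => ?_)
          rw [abs_mul, abs_of_nonneg (hm i)]
          exact mul_le_mul_of_nonneg_right (hlam i) (hm i)
      _ = specNorm A * ∑ i, (star U * M * U) i i := by rw [Finset.mul_sum]
      _ = specNorm A * M.trace := by rw [← s0eq]
  have hkey : ∀ M : Matrix (Fin q) (Fin q) ℝ, M.PosSemidef →
      (0 ≤ f₁ M + g₁ M ∧ f₁ M + g₁ M ≤ ψf M * (specNorm A ^ 2 * Real.exp (specNorm A)))
        ∧ |g₁ M| ≤ specNorm A * ψf M := by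
    intro M hM
    rcases psd_zero_or_pos hM with h0 | hpos
    · rw [h0]
      have hz : ((mexp A)⁻¹ * (0 : Matrix (Fin q) (Fin q) ℝ)).trace = (0:ℝ) := by simp
      constructor
      · constructor
        · simp [f₁, g₁, hz]
        · simp [f₁, g₁, ψf, hz]
      · simp [g₁, ψf]
    · have hMne : M ≠ 0 := by
        intro h; rw [h] at hpos; simp at hpos
      have hm : ∀ i, 0 ≤ (star U * M * U) i i := conj_diag_nonneg hM U
      have hs : 0 < ∑ i, (star U * M * U) i i := by rw [← s0eq]; exact hpos
      have hk := key_vec hρfull (fun i => (star U * M * U) i i) lam hm (specNorm A)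
        ha0 hlam hs
      rw [← s1eq M, ← tAMeq M, ← s0eq M] at hk
      have he : f₁ M + g₁ M = ρ ((mexp A)⁻¹ * M).trace - ρ M.trace
          + ρ' M.trace * (Aᵀ * M).trace := by
        simp only [hf₁def, hg₁def, if_neg hMne]
      constructor
      · constructor
        · rw [he]; exact hk.1
        · rw [he]
          calc ρ ((mexp A)⁻¹ * M).trace - ρ M.trace + ρ' M.trace * (Aᵀ * M).trace
              ≤ M.trace * ρ' M.trace * (specNorm A ^ 2 * Real.exp (specNorm A)) := hk.2
            _ = ψf M * (specNorm A ^ 2 * Real.exp (specNorm A)) := rfl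
      · have htam := htampos M hM
        have hρ'p : 0 < ρ' M.trace := hρ'pos _ hpos
        calc |g₁ M| = ρ' M.trace * |(Aᵀ * M).trace| := by
              rw [hg₁def]
              show |if M = 0 then 0 else ρ' M.trace * (Aᵀ * M).trace| = _
              rw [if_neg hMne, abs_mul, abs_of_pos hρ'p]
          _ ≤ ρ' M.trace * (specNorm A * M.trace) :=
              mul_le_mul_of_nonneg_left htam hρ'p.le
          _ = specNorm A * ψf M := by show _ = specNorm A * (M.trace * ρ' M.trace); ring
  -- integrability of the entrywise Psi integrands
  have hijae : ∀ i j : Fin q,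
      (fun M : Matrix (Fin q) (Fin q) ℝ => rho'h M.trace * M i j)
        =ᵐ[Q] (fun M => if M = 0 then 0 else ρ' M.trace * M i j) := by
    intro i j
    filter_upwards [hQpsd] with M hM
    rcases psd_zero_or_pos hM with h0 | hpos
    · rw [h0]; simp
    · have hMne : M ≠ 0 := by intro h; rw [h] at hpos; simp at hpos
      rw [if_neg hMne, hrho'h, Set.indicator_of_mem (Set.mem_Ioi.mpr hpos)]
  have hijAESM : ∀ i j : Fin q, AEStronglyMeasurable
      (fun M : Matrix (Fin q) (Fin q) ℝ => if M = 0 then 0 else ρ' M.trace * M i j) Q :=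
    fun i j => (((hmρ'.comp htrmeas).mul (hentry i j)).aestronglyMeasurable).congr (hijae i j)
  have hij_int : ∀ i j : Fin q, Integrable
      (fun M : Matrix (Fin q) (Fin q) ℝ => if M = 0 then 0 else ρ' M.trace * M i j) Q := by
    intro i j
    refine Integrable.mono' hψint (hijAESM i j) ?_
    filter_upwards [hQpsd] with M hM
    rcases psd_zero_or_pos hM with h0 | hpos
    · rw [h0]; simp [ψf]
    · have hMne : M ≠ 0 := by intro h; rw [h] at hpos; simp at hpos
      rw [if_neg hMne, Real.norm_eq_abs, abs_mul, abs_of_pos (hρ'pos _ hpos)]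
      calc ρ' M.trace * |M i j| ≤ ρ' M.trace * M.trace :=
            mul_le_mul_of_nonneg_left (psd_entry_abs_le hM i j) (hρ'pos _ hpos).le
        _ = ψf M := by show _ = M.trace * ρ' M.trace; ring
  have hg₁AESM : AEStronglyMeasurable g₁ Q := by
    refine AEStronglyMeasurable.congr
      (((hmρ'.comp htrmeas).mul (htrmulmeas Aᵀ)).aestronglyMeasurable) ?_
    filter_upwards [hQpsd] with M hM
    rcases psd_zero_or_pos hM with h0 | hpos
    · rw [h0]; simp [g₁]
    · have hMne : M ≠ 0 := by intro h; rw [h] at hpos; simp at hpos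
      show rho'h M.trace * (Aᵀ * M).trace = g₁ M
      rw [hg₁def]
      show _ = if M = 0 then 0 else ρ' M.trace * (Aᵀ * M).trace
      rw [if_neg hMne, hrho'h, Set.indicator_of_mem (Set.mem_Ioi.mpr hpos)]
  have hg₁int : Integrable g₁ Q := by
    refine Integrable.mono' (hψint.const_mul (specNorm A)) hg₁AESM ?_
    filter_upwards [hQpsd] with M hM
    rw [Real.norm_eq_abs]
    exact (hkey M hM).2
  have hS1pos : ∀ M : Matrix (Fin q) (Fin q) ℝ, M.PosSemidef → 0 < M.trace →
      0 < ((mexp A)⁻¹ * M).trace := by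
    intro M hM hpos
    rw [s1eq]
    have hm : ∀ i, 0 ≤ (star U * M * U) i i := conj_diag_nonneg hM U
    have hs : 0 < ∑ i, (star U * M * U) i i := by rw [← s0eq]; exact hpos
    have hex : ∃ i ∈ Finset.univ, 0 < (star U * M * U) i i := by
      by_contra hcon
      push_neg at hcon
      have hle : (∑ i, (star U * M * U) i i) ≤ 0 :=
        Finset.sum_nonpos (fun i hi => hcon i hi)
      linarith
    obtain ⟨i, _, hi⟩ := hex
    refine Finset.sum_pos' (fun k _ => mul_nonneg (hm k) (Real.exp_pos _).le)
      ⟨i, Finset.mem_univ i, mul_pos hi (Real.exp_pos _)⟩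
  have hf₁AESM : AEStronglyMeasurable f₁ Q := by
    have hc1 : Measurable (fun M : Matrix (Fin q) (Fin q) ℝ => rhoh ((mexp A)⁻¹ * M).trace) :=
      hmρ.comp (htrmulmeas (mexp A)⁻¹)
    have hc2 : Measurable (fun M : Matrix (Fin q) (Fin q) ℝ => rhoh M.trace) :=
      hmρ.comp htrmeas
    refine AEStronglyMeasurable.congr ((hc1.sub hc2).aestronglyMeasurable) ?_
    filter_upwards [hQpsd] with M hM
    rcases psd_zero_or_pos hM with h0 | hpos
    · rw [h0]
      show rhoh ((mexp A)⁻¹ * 0).trace - rhoh (0 : Matrix (Fin q) (Fin q) ℝ).trace = f₁ 0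
      simp [f₁]
    · have h1 := hS1pos M hM hpos
      show rhoh ((mexp A)⁻¹ * M).trace - rhoh M.trace = f₁ M
      rw [hrhoh, Set.indicator_of_mem (Set.mem_Ioi.mpr h1), Set.indicator_of_mem (Set.mem_Ioi.mpr hpos)]
  have hf₁int : Integrable f₁ Q := by
    refine Integrable.mono'
      (hψint.const_mul (specNorm A ^ 2 * Real.exp (specNorm A) + specNorm A)) hf₁AESM ?_
    filter_upwards [hQpsd] with M hM
    obtain ⟨⟨hk1, hk2⟩, hk3⟩ := hkey M hM
    have hψnn := hψf_nn M hM
    rw [Real.norm_eq_abs, abs_le]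
    have habs := abs_le.mp hk3
    constructor <;> nlinarith
  -- the linear term
  have hlin : (Aᵀ * Gmat q ρ' Q).trace = A.trace - ∫ M, g₁ M ∂Q := by
    rw [Gmat, Matrix.mul_sub, Matrix.mul_one, Matrix.trace_sub, Matrix.trace_transpose]
    congr 1
    have hPsiApp : ∀ i j : Fin q, Psi q ρ' Q 1 j i
        = ∫ M, (if M = 0 then 0 else ρ' M.trace * M j i) ∂Q := by
      intro i j
      simp only [Psi, Matrix.of_apply, inv_one, Matrix.one_mul]
    rw [trace_transpose_mul_apply]
    calc ∑ i, ∑ j, A j i * Psi q ρ' Q 1 j i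
        = ∑ i, ∑ j, ∫ M, A j i * (if M = 0 then 0 else ρ' M.trace * M j i) ∂Q := by
          refine Finset.sum_congr rfl fun i _ => Finset.sum_congr rfl fun j _ => ?_
          rw [hPsiApp i j, ← integral_const_mul]
      _ = ∫ M, ∑ i, ∑ j, A j i * (if M = 0 then 0 else ρ' M.trace * M j i) ∂Q := by
          rw [integral_finset_sum _
            (fun i _ => integrable_finset_sum _ (fun j _ => (hij_int j i).const_mul _))]
          refine Finset.sum_congr rfl fun i _ => ?_
          rw [integral_finset_sum _ (fun j _ => (hij_int j i).const_mul _)]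
      _ = ∫ M, g₁ M ∂Q := by
          refine integral_congr_ae (Filter.Eventually.of_forall (fun M => ?_))
          by_cases h0 : M = 0
          · simp [g₁, h0]
          · simp only [hg₁def, if_neg h0, trace_transpose_mul_apply, Finset.mul_sum]
            refine Finset.sum_congr rfl fun i _ => Finset.sum_congr rfl fun j _ => ?_
            ring
  have hLrho : Lrho q ρ Q (mexp A) = (∫ M, f₁ M ∂Q) + A.trace := by
    show (∫ M, (ρ ((mexp A)⁻¹ * M).trace - ρ M.trace) ∂Q) + Real.log (mexp A).det
      = (∫ M, f₁ M ∂Q) + A.trace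
    rw [hlogdet]
  constructor
  · rw [hlin]
    have h1 : |∫ M, g₁ M ∂Q| ≤ specNorm A * Jq q ρ' Q := by
      calc |∫ M, g₁ M ∂Q| ≤ ∫ M, |g₁ M| ∂Q := by
            have hn := norm_integral_le_integral_norm (μ := Q) g₁
            simpa [Real.norm_eq_abs] using hn
        _ ≤ ∫ M, specNorm A * ψf M ∂Q := by
            refine integral_mono_ae hg₁int.abs (hψint.const_mul _) ?_
            filter_upwards [hQpsd] with M hM
            exact (hkey M hM).2
        _ = specNorm A * Jq q ρ' Q := by rw [integral_const_mul, hJq]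
    calc |A.trace - ∫ M, g₁ M ∂Q|
        ≤ |A.trace| + |∫ M, g₁ M ∂Q| := by
          rw [sub_eq_add_neg]
          exact (abs_add_le _ _).trans (by rw [abs_neg])
      _ ≤ (q:ℝ) * specNorm A + specNorm A * Jq q ρ' Q := add_le_add htrAbound h1
      _ = ((q:ℝ) + Jq q ρ' Q) * specNorm A := by ring
  · have hR : Lrho q ρ Q (mexp A) - (Aᵀ * Gmat q ρ' Q).trace
        = ∫ M, (f₁ M + g₁ M) ∂Q := by
      rw [hLrho, hlin, integral_add hf₁int hg₁int]
      ring
    rw [hR]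
    have hnn : 0 ≤ ∫ M, (f₁ M + g₁ M) ∂Q := by
      refine integral_nonneg_of_ae ?_
      filter_upwards [hQpsd] with M hM
      exact (hkey M hM).1.1
    have hub : (∫ M, (f₁ M + g₁ M) ∂Q)
        ≤ ∫ M, ψf M * (specNorm A ^ 2 * Real.exp (specNorm A)) ∂Q := by
      refine integral_mono_ae (hf₁int.add hg₁int) (hψint.mul_const _) ?_
      filter_upwards [hQpsd] with M hM
      exact (hkey M hM).1.2
    rw [abs_of_nonneg hnn]
    calc (∫ M, (f₁ M + g₁ M) ∂Q)
        ≤ ∫ M, ψf M * (specNorm A ^ 2 * Real.exp (specNorm A)) ∂Q := hub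
      _ = Jq q ρ' Q * (specNorm A ^ 2 * Real.exp (specNorm A)) := by
          rw [integral_mul_const, hJq]
      _ = Jq q ρ' Q * specNorm A ^ 2 * Real.exp (specNorm A) := by ring
end

section
/- Let M ∈ ℝ^{q×q} be symmetric and let x ∈ ℝ^q be such that B·M·Bᵀ = M for every orthogonal matrix B ∈ ℝ^{q×q} with Bx = x. Then there exist real numbers γ and κ such that M = γ·xxᵀ + κ·I_q. -/
open Matrix

namespace Stmt19Aux

variable {q : ℕ}

lemma vmv_mulVec (u v w : Fin q → ℝ) :
    (vecMulVec u v).mulVec w = (v ⬝ᵥ w) • u := by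
  ext i
  simp [vecMulVec, mulVec, dotProduct, Finset.mul_sum, mul_comm, mul_left_comm]

lemma vmv_transpose (u : Fin q → ℝ) : (vecMulVec u u)ᵀ = vecMulVec u u := by
  ext i j; simp [vecMulVec, mul_comm]

lemma vmv_mul_vmv (u : Fin q → ℝ) (hu : u ⬝ᵥ u = 1) :
    vecMulVec u u * vecMulVec u u = vecMulVec u u := by
  ext i j
  simp only [vecMulVec, mul_apply, of_apply]
  have : ∑ k, u i * u k * (u k * u j) = (u i * u j) * (u ⬝ᵥ u) := by
    rw [dotProduct, Finset.mul_sum]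
    exact Finset.sum_congr rfl fun k _ => by ring
  rw [this, hu, mul_one]

/-- Every unit vector orthogonal to `x` is an eigenvector. -/
lemma eig_unit (M : Matrix (Fin q) (Fin q) ℝ) (x : Fin q → ℝ)
    (hinv : ∀ B : Matrix (Fin q) (Fin q) ℝ, Bᵀ * B = 1 → B.mulVec x = x →
      B * M * Bᵀ = M)
    (u : Fin q → ℝ) (hu : u ⬝ᵥ u = 1) (hxu : x ⬝ᵥ u = 0) :
    M.mulVec u = (u ⬝ᵥ M.mulVec u) • u := by
  set P : Matrix (Fin q) (Fin q) ℝ := vecMulVec u u with hP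
  set B : Matrix (Fin q) (Fin q) ℝ := 1 - (2 : ℝ) • P with hB
  have hPt : Pᵀ = P := vmv_transpose u
  have hPP : P * P = P := vmv_mul_vmv u hu
  have hBt : Bᵀ = B := by
    rw [hB, transpose_sub, transpose_smul, transpose_one, hPt]
  have hBB : B * B = 1 := by
    rw [hB]
    simp only [sub_mul, mul_sub, one_mul, mul_one, smul_mul_assoc, mul_smul_comm, hPP,
      smul_smul]
    module
  have hBx : B.mulVec x = x := by
    rw [hB, sub_mulVec, one_mulVec, smul_mulVec, hP, vmv_mulVec, dotProduct_comm, hxu]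
    simp
  have hMB : B * M * B = M := by
    have := hinv B (by rw [hBt, hBB]) hBx
    rwa [hBt] at this
  have hcomm : B * M = M * B := by
    have := congrArg (· * B) hMB
    simpa [mul_assoc, hBB] using this
  have hBu : B.mulVec u = -u := by
    rw [hB, sub_mulVec, one_mulVec, smul_mulVec, hP, vmv_mulVec, hu]
    simp [two_smul]
  have h1 : B.mulVec (M.mulVec u) = M.mulVec (B.mulVec u) := by
    rw [mulVec_mulVec, mulVec_mulVec, hcomm]
  rw [hBu, mulVec_neg] at h1
  rw [hB, sub_mulVec, one_mulVec, smul_mulVec, hP, vmv_mulVec] at h1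
  have h2 : (2 : ℝ) • M.mulVec u = (2 : ℝ) • ((u ⬝ᵥ M.mulVec u) • u) := by
    have := congrArg (M.mulVec u + ·) h1
    rw [add_neg_cancel] at this
    funext i
    have := congrFun this i
    simp only [Pi.add_apply, Pi.sub_apply, Pi.smul_apply, Pi.zero_apply, smul_eq_mul] at this ⊢
    linarith
  have := smul_right_injective (Fin q → ℝ) (two_ne_zero (α := ℝ)) h2
  exact this

lemma dot_self_pos {w : Fin q → ℝ} (hw : w ≠ 0) : 0 < w ⬝ᵥ w := by
  have h0 : w ⬝ᵥ w ≠ 0 := fun h => hw ((dotProduct_self_eq_zero).mp h)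
  have hnn : 0 ≤ w ⬝ᵥ w := Finset.sum_nonneg fun i _ => mul_self_nonneg _
  exact lt_of_le_of_ne hnn (Ne.symm h0)

/-- Every vector orthogonal to `x` is an eigenvector. -/
lemma eig_any (M : Matrix (Fin q) (Fin q) ℝ) (x : Fin q → ℝ)
    (hinv : ∀ B : Matrix (Fin q) (Fin q) ℝ, Bᵀ * B = 1 → B.mulVec x = x →
      B * M * Bᵀ = M)
    (w : Fin q → ℝ) (hw : w ≠ 0) (hxw : x ⬝ᵥ w = 0) :
    ∃ c : ℝ, M.mulVec w = c • w := by
  have hs : 0 < w ⬝ᵥ w := dot_self_pos hw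
  set r : ℝ := Real.sqrt (w ⬝ᵥ w) with hr
  have hrpos : 0 < r := Real.sqrt_pos.mpr hs
  have hrr : r * r = w ⬝ᵥ w := Real.mul_self_sqrt hs.le
  set u : Fin q → ℝ := r⁻¹ • w with hu
  have huu : u ⬝ᵥ u = 1 := by
    rw [hu, dotProduct_smul, smul_dotProduct, smul_eq_mul, smul_eq_mul, ← hrr]
    field_simp
  have hxu : x ⬝ᵥ u = 0 := by
    rw [hu, dotProduct_smul, hxw, smul_zero]
  have h := eig_unit M x hinv u huu hxu
  refine ⟨u ⬝ᵥ M.mulVec u, ?_⟩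
  have hw' : w = r • u := by
    rw [hu, smul_smul, mul_inv_cancel₀ hrpos.ne', one_smul]
  rw [hw', mulVec_smul, h, smul_comm, dotProduct_smul, huu, smul_eq_mul, mul_one]

/-- All the eigenvalues on `x`-perp agree. -/
lemma eig_const (M : Matrix (Fin q) (Fin q) ℝ) (x : Fin q → ℝ)
    (hinv : ∀ B : Matrix (Fin q) (Fin q) ℝ, Bᵀ * B = 1 → B.mulVec x = x →
      B * M * Bᵀ = M) :
    ∃ κ : ℝ, ∀ w : Fin q → ℝ, x ⬝ᵥ w = 0 → M.mulVec w = κ • w := by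
  by_cases hex : ∃ w₀ : Fin q → ℝ, w₀ ≠ 0 ∧ x ⬝ᵥ w₀ = 0
  · obtain ⟨w₀, hw₀, hxw₀⟩ := hex
    obtain ⟨κ, hκ⟩ := eig_any M x hinv w₀ hw₀ hxw₀
    refine ⟨κ, fun w hxw => ?_⟩
    by_cases hw : w = 0
    · simp [hw]
    by_cases hdep : ∃ t : ℝ, w = t • w₀
    · obtain ⟨t, rfl⟩ := hdep
      rw [mulVec_smul, hκ, smul_comm]
    · obtain ⟨c, hc⟩ := eig_any M x hinv w hw hxw
      have hsum : w + w₀ ≠ 0 := by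
        intro h
        exact hdep ⟨-1, by rw [neg_smul, one_smul, eq_neg_iff_add_eq_zero]; exact h⟩
      obtain ⟨d, hd⟩ := eig_any M x hinv (w + w₀) hsum
        (by rw [dotProduct_add, hxw, hxw₀, add_zero])
      rw [mulVec_add, hc, hκ, smul_add] at hd
      have key : (c - d) • w = (d - κ) • w₀ := by
        have := sub_eq_zero.mpr hd
        funext i
        have := congrFun this i
        simp only [Pi.add_apply, Pi.sub_apply, Pi.smul_apply, Pi.zero_apply, smul_eq_mul,
          sub_smul] at this ⊢
        linarith
      have hcd : c = d := by
        by_contra hne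
        apply hdep
        refine ⟨(d - κ) / (c - d), ?_⟩
        have hcd0 : c - d ≠ 0 := sub_ne_zero.mpr hne
        funext i
        have := congrFun key i
        simp only [Pi.smul_apply, smul_eq_mul] at this ⊢
        field_simp
        linarith [this]
      have hdκ : d = κ := by
        rw [hcd, sub_self, zero_smul] at key
        have := (smul_eq_zero.mp key.symm).resolve_right hw₀
        linarith [sub_eq_zero.mp this]
      rw [hc, hcd, hdκ]
  · push_neg at hex
    refine ⟨0, fun w hxw => ?_⟩
    rcases eq_or_ne w 0 with rfl | hw
    · simp
    · exact absurd hxw (hex w hw)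

lemma eq_of_mulVec (A B : Matrix (Fin q) (Fin q) ℝ)
    (h : ∀ v, A.mulVec v = B.mulVec v) : A = B := by
  ext i j
  have := congrFun (h (Pi.single j 1)) i
  simpa [mulVec_single] using this

end Stmt19Aux

open Stmt19Aux

/-- A symmetric matrix `M` that is invariant under conjugation by every orthogonal
matrix fixing `x` must be of the form `γ·xxᵀ + κ·I`. -/
theorem stmt19 (q : ℕ) (hq : 1 ≤ q) (M : Matrix (Fin q) (Fin q) ℝ) (hM : M.IsSymm)
    (x : Fin q → ℝ)
    (hinv : ∀ B : Matrix (Fin q) (Fin q) ℝ, Bᵀ * B = 1 → B.mulVec x = x →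
      B * M * Bᵀ = M) :
    ∃ γ κ : ℝ, M = γ • Matrix.vecMulVec x x + κ • 1 := by
  obtain ⟨κ, hκ⟩ := eig_const M x hinv
  have hsymm : ∀ u v : Fin q → ℝ, u ⬝ᵥ M.mulVec v = M.mulVec u ⬝ᵥ v := by
    intro u v
    rw [dotProduct_mulVec, ← mulVec_transpose, hM.eq]
  by_cases hx : x = 0
  · refine ⟨0, κ, ?_⟩
    apply eq_of_mulVec
    intro v
    rw [hκ v (by rw [hx, zero_dotProduct])]
    rw [add_mulVec, smul_mulVec, smul_mulVec, one_mulVec, zero_smul, zero_add]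
  · have hs : 0 < x ⬝ᵥ x := dot_self_pos hx
    set μ : ℝ := (x ⬝ᵥ M.mulVec x) / (x ⬝ᵥ x) with hμ
    set z : Fin q → ℝ := M.mulVec x - μ • x with hz
    have hxz : x ⬝ᵥ z = 0 := by
      rw [hz, dotProduct_sub, dotProduct_smul, smul_eq_mul, hμ]
      field_simp
      ring
    have hzMx : z ⬝ᵥ M.mulVec x = 0 := by
      rw [hsymm, hκ z hxz, smul_dotProduct, dotProduct_comm, hxz, smul_zero]
    have hzz : z ⬝ᵥ z = 0 := by
      have : z ⬝ᵥ z = z ⬝ᵥ M.mulVec x - μ • (z ⬝ᵥ x) := by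
        rw [hz]
        rw [dotProduct_sub, dotProduct_smul]
      rw [this, hzMx, dotProduct_comm, hxz, smul_zero, sub_zero]
    have hz0 : z = 0 := dotProduct_self_eq_zero.mp hzz
    have hMx : M.mulVec x = μ • x := by
      exact sub_eq_zero.mp (by rw [← hz]; exact hz0)
    refine ⟨(μ - κ) / (x ⬝ᵥ x), κ, ?_⟩
    apply eq_of_mulVec
    intro v
    set a : ℝ := (x ⬝ᵥ v) / (x ⬝ᵥ x) with ha
    set w : Fin q → ℝ := v - a • x with hw
    have hxw : x ⬝ᵥ w = 0 := by
      rw [hw, dotProduct_sub, dotProduct_smul, smul_eq_mul, ha]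
      field_simp
      ring
    have hv : v = a • x + w := by rw [hw]; abel
    have hxv : x ⬝ᵥ v = a * (x ⬝ᵥ x) := by rw [ha]; field_simp
    rw [add_mulVec, smul_mulVec, smul_mulVec, one_mulVec, vmv_mulVec, hxv]
    calc M.mulVec v = a • M.mulVec x + M.mulVec w := by
          rw [hv, mulVec_add, mulVec_smul]
      _ = a • μ • x + κ • w := by rw [hMx, hκ w hxw]
      _ = ((μ - κ) / (x ⬝ᵥ x)) • (a * (x ⬝ᵥ x)) • x + κ • v := by
          rw [hv]
          have hss : ((μ - κ) / (x ⬝ᵥ x)) * (a * (x ⬝ᵥ x)) = a * μ - a * κ := by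
            field_simp
          rw [smul_smul, smul_smul, hss]
          funext i
          simp only [Pi.add_apply, Pi.smul_apply, smul_eq_mul, Pi.sub_apply, hw]
          ring
end
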